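/- arXiv:2211.15237 — 3 statements merged into one kernel-verified Lean document; each statement's English description precedes it below -/
import Mathlib

section
/- Let B ⊆ ℝ^d be a convex body, let X be a set of M ≥ 2 distinct points of B, and let z ∈ B \ X. Then z ∈ Keep(X;B) if and only if there exists x ∈ X such that F({z} ∪ (X \ {x})) < F(X). -/
open Finset Metric MeasureTheory
open scoped BigOperators ENNReal RealInnerProductSpace

noncomputable section

instance {d : ℕ} : DecidableEq (EuclideanSpace ℝ (Fin d)) := Classical.decEq _

/-- `E d` is the Euclidean space `ℝ^d`. -/
abbrev E (d : ℕ) : Type := EuclideanSpace ℝ (Fin d)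

/-- `Σ(X)`, the sum of the points of `X`. -/
def csum {d : ℕ} (X : Finset (E d)) : E d := ∑ x ∈ X, x

/-- `μ(X)`, the center of mass of `X`. -/
def cm {d : ℕ} (X : Finset (E d)) : E d := (X.card : ℝ)⁻¹ • csum X

/-- `F(X) = Σ_{i<j} ‖x_i - x_j‖²`, the moment of inertia of `X`. -/
def inertia {d : ℕ} (X : Finset (E d)) : ℝ := (∑ x ∈ X, ∑ y ∈ X, ‖x - y‖ ^ 2) / 2

/-- `A(X) = max_{w ∈ X} ‖w - μ(X)‖`. -/
def Amax {d : ℕ} (X : Finset (E d)) : ℝ := sSup ((fun w => ‖w - cm X‖) '' (X : Set (E d)))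

/-- `D(X) = max_{i ≠ j} ‖x_i - x_j‖`. -/
def Dmax {d : ℕ} (X : Finset (E d)) : ℝ :=
  sSup {r : ℝ | ∃ x ∈ X, ∃ y ∈ X, x ≠ y ∧ r = ‖x - y‖}

/-- `d(X) = min_{i ≠ j} ‖x_i - x_j‖`. -/
def dmin {d : ℕ} (X : Finset (E d)) : ℝ :=
  sInf {r : ℝ | ∃ x ∈ X, ∃ y ∈ X, x ≠ y ∧ r = ‖x - y‖}

/-- `Keep(X;B) = { x ∈ B : ‖x - μ({x} ∪ X)‖ < max_{s ∈ X} ‖s - μ({x} ∪ X)‖ }`. -/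
def Keep {d : ℕ} (X : Finset (E d)) (B : Set (E d)) : Set (E d) :=
  {x ∈ B | ‖x - cm (insert x X)‖ <
    sSup ((fun s => ‖s - cm (insert x X)‖) '' (X : Set (E d)))}

/-- `V(k)`, the Lebesgue measure of the unit ball in `ℝ^k` (so `V 0 = 1`). -/
def ubVol (k : ℕ) : ℝ := (volume (Metric.ball (0 : EuclideanSpace ℝ (Fin k)) 1)).toReal

/-! For every point `c`, expanding the squares gives
`F(Y) = |Y| ∑_{y ∈ Y} ‖y - c‖² - ‖∑_{y ∈ Y} (y - c)‖²`. Take for `c` the center of mass `μ` of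
`X ∪ {z}`: then `∑_{y ∈ X} (y - μ) = -(z - μ)`, and exchanging `x ∈ X` for `z` turns this sum into
`-(x - μ)` without changing the cardinality `M`. Hence
`F(X \ {x} ∪ {z}) - F(X) = (M + 1) (‖z - μ‖² - ‖x - μ‖²)`, so some exchange lowers `F` iff some
point of `X` is farther from `μ` than `z`, which is the condition defining `Keep(X;B)`. -/

theorem sum_sum_norm_sub_sq {ι F : Type*} [NormedAddCommGroup F] [InnerProductSpace ℝ F]
    (s : Finset ι) (v : ι → F) :
    ∑ i ∈ s, ∑ j ∈ s, ‖v i - v j‖ ^ 2 = 2 * (#s * ∑ i ∈ s, ‖v i‖ ^ 2 - ‖∑ i ∈ s, v i‖ ^ 2) := by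
  simp only [norm_sub_sq_real, sum_add_distrib, sum_sub_distrib, ← inner_sum, ← mul_sum,
    ← sum_inner, real_inner_self_eq_norm_sq, sum_const, nsmul_eq_mul]
  ring

theorem lt_sSup_image_finset_iff {α : Type*} (s : Finset α) (f : α → ℝ) {a : ℝ} (ha : 0 ≤ a) :
    a < sSup (f '' s) ↔ ∃ x ∈ s, a < f x := by
  rcases s.eq_empty_or_nonempty with rfl | hs
  · simp [ha.not_gt]
  · rw [lt_csSup_iff (s.finite_toSet.image f).bddAbove (Set.Nonempty.image f hs)]
    simp

section

variable {d : ℕ}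

theorem inertia_eq_card_mul_sub (X : Finset (E d)) (c : E d) :
    inertia X = #X * ∑ x ∈ X, ‖x - c‖ ^ 2 - ‖∑ x ∈ X, (x - c)‖ ^ 2 := by
  have h := sum_sum_norm_sub_sq X (· - c)
  simp only [sub_sub_sub_cancel_right] at h
  rw [inertia, h]
  ring

theorem sum_sub_cm_eq_zero {X : Finset (E d)} (hX : X.Nonempty) : ∑ x ∈ X, (x - cm X) = 0 := by
  have hcard : (#X : ℝ) ≠ 0 := Nat.cast_ne_zero.mpr hX.card_pos.ne'
  rw [sum_sub_distrib, sum_const, ← Nat.cast_smul_eq_nsmul ℝ, cm, smul_smul,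
    mul_inv_cancel₀ hcard, one_smul, csum, sub_self]

theorem inertia_insert_erase_sub_inertia {X : Finset (E d)} {x z : E d} (hx : x ∈ X)
    (hz : z ∉ X) :
    inertia (insert z (X.erase x)) - inertia X =
      (#X + 1) * (‖z - cm (insert z X)‖ ^ 2 - ‖x - cm (insert z X)‖ ^ 2) := by
  set μ := cm (insert z X)
  have hzx : z ∉ X.erase x := fun h => hz (mem_of_mem_erase h)
  have hcard : #(insert z (X.erase x)) = #X := by
    rw [card_insert_of_notMem hzx, card_erase_add_one hx]
  have hsum : ∑ y ∈ X, (y - μ) = -(z - μ) := by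
    have h := sum_sub_cm_eq_zero (insert_nonempty z X)
    rw [sum_insert hz] at h
    exact eq_neg_of_add_eq_zero_right h
  have hsum' : ∑ y ∈ insert z (X.erase x), (y - μ) = -(x - μ) := by
    rw [sum_insert hzx, sum_erase_eq_sub hx, hsum]
    abel
  rw [inertia_eq_card_mul_sub _ μ, inertia_eq_card_mul_sub X μ, hcard, hsum, hsum',
    sum_insert hzx, sum_erase_eq_sub hx, norm_neg, norm_neg]
  ring

theorem inertia_insert_erase_lt_iff {X : Finset (E d)} {x z : E d} (hx : x ∈ X) (hz : z ∉ X) :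
    inertia (insert z (X.erase x)) < inertia X ↔
      ‖z - cm (insert z X)‖ < ‖x - cm (insert z X)‖ := by
  have hpos : (0 : ℝ) < #X + 1 := by positivity
  rw [← sub_neg, inertia_insert_erase_sub_inertia hx hz,
    ← sq_lt_sq₀ (norm_nonneg _) (norm_nonneg _), ← sub_neg (a := ‖z - _‖ ^ 2)]
  exact smul_neg_iff_of_pos_left (β := ℝ) hpos

end

theorem stmt_1_general (d : ℕ) (B : Set (E d))
    (X : Finset (E d))
    (z : E d) (hzB : z ∈ B) (hz : z ∉ X) :
    z ∈ Keep X B ↔ ∃ x ∈ X, inertia (insert z (X.erase x)) < inertia X := by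
  simp only [Keep, Set.mem_ofPred_eq, hzB, true_and,
    lt_sSup_image_finset_iff _ _ (norm_nonneg _)]
  exact exists_congr fun x => and_congr_right fun hx => (inertia_insert_erase_lt_iff hx hz).symm

/-- A point `z ∈ B \ X` belongs to `Keep(X;B)` iff replacing some point of `X`
by `z` strictly decreases the moment of inertia. -/
theorem stmt_1 (d : ℕ) (B : Set (E d))
    (hBconv : Convex ℝ B) (hBcl : IsClosed B) (hBint : (interior B).Nonempty)
    (X : Finset (E d)) (hX : 2 ≤ X.card) (hXB : ↑X ⊆ B)
    (z : E d) (hzB : z ∈ B) (hz : z ∉ X) :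
    z ∈ Keep X B ↔ ∃ x ∈ X, inertia (insert z (X.erase x)) < inertia X :=
  stmt_1_general d B X z hzB hz
end
end

section
/- Let B ⊆ ℝ^d be a convex body and let X be a set of M ≥ 2 distinct points of B. Then λ( { z ∈ Keep(X;B) : there exists x ∈ X with F({z} ∪ (X \ {x})) < (1 − 1/(4M))·F(X) } ) ≥ 4^{−d} · λ( Keep(X;B) ). -/
open Finset Metric MeasureTheory
open scoped BigOperators ENNReal RealInnerProductSpace

noncomputable section

/-! Let `c = μ(X)` and let `x' ∈ X` be at distance `A = A(X)` from `c`. Adding a point `z` to `X`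
moves the centre of mass by `‖z - c‖ / (M + 1)`, so every point of `Keep(X;B)` lies within `3A` of
`c`, while every point of `B` within `A` of `c` lies in `Keep(X;B)`. Hence the homothety of ratio
`1/4` about `c ∈ B`, which scales volume by `4^{-d}`, maps `Keep(X;B)` to points `w ∈ Keep(X;B)`
with `‖w - c‖ < 3A/4`. Replacing `x'` by such a `w` lowers the inertia by more than `F(X)/(4M)`:
by the parallel axis theorem `F(Y) ≤ |Y| Σ_{y ∈ Y} ‖y - c‖²`, with equality for `Y = X`, the
inertia drops by at least `M (A² - 9A²/16)`, and `F(X) ≤ M² A²`. -/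

section Farthest

variable {F : Type*} [NormedAddCommGroup F] {X : Finset F}

lemma norm_sub_le_sSup_image {s : F} (hs : s ∈ X) (p : F) :
    ‖s - p‖ ≤ sSup ((fun s => ‖s - p‖) '' (X : Set F)) :=
  le_csSup ((X.finite_toSet.image _).bddAbove) (Set.mem_image_of_mem _ hs)

lemma exists_norm_sub_eq_sSup_image (hX : X.Nonempty) (p : F) :
    ∃ x ∈ X, ‖x - p‖ = sSup ((fun s => ‖s - p‖) '' (X : Set F)) := by
  obtain ⟨x, hx, hmax⟩ := X.exists_max_image (fun s => ‖s - p‖) hX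
  exact ⟨x, hx, (IsGreatest.csSup_eq ⟨Set.mem_image_of_mem _ hx,
    Set.forall_mem_image.2 hmax⟩).symm⟩

lemma sSup_image_norm_sub_le_add (hX : X.Nonempty) (p q : F) :
    sSup ((fun s => ‖s - p‖) '' (X : Set F)) ≤
      sSup ((fun s => ‖s - q‖) '' (X : Set F)) + ‖q - p‖ :=
  csSup_le ((coe_nonempty.2 hX).image _) <| Set.forall_mem_image.2 fun s hs =>
    (norm_sub_le_norm_sub_add_norm_sub s q p).trans
      (add_le_add_left (norm_sub_le_sSup_image hs q) _)

lemma sSup_image_norm_sub_pos {a b : F} (ha : a ∈ X) (hb : b ∈ X) (hab : a ≠ b) (p : F) :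
    0 < sSup ((fun s => ‖s - p‖) '' (X : Set F)) := by
  have h := norm_sub_le_norm_sub_add_norm_sub a p b
  rw [norm_sub_rev p b] at h
  linarith [norm_sub_pos_iff.2 hab, norm_sub_le_sSup_image ha p, norm_sub_le_sSup_image hb p]

end Farthest

section

variable {d : ℕ}

lemma csum_eq_card_smul_cm (X : Finset (E d)) : csum X = (X.card : ℝ) • cm X := by
  rcases X.eq_empty_or_nonempty with rfl | hX
  · simp [csum]
  · rw [cm, smul_smul, mul_inv_cancel₀ (by exact_mod_cast hX.card_pos.ne'), one_smul]

lemma cm_insert_of_notMem {X : Finset (E d)} {z : E d} (hz : z ∉ X) :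
    cm (insert z X) = cm X + ((X.card : ℝ) + 1)⁻¹ • (z - cm X) := by
  have hn : (X.card : ℝ) + 1 ≠ 0 := by positivity
  rw [cm, csum, sum_insert hz, card_insert_of_notMem hz, ← csum, csum_eq_card_smul_cm]
  push_cast
  match_scalars <;> field_simp
  ring

lemma cm_mem_of_convex {B : Set (E d)} (hB : Convex ℝ B) {X : Finset (E d)} (hX : X.Nonempty)
    (hXB : ↑X ⊆ B) : cm X ∈ B := by
  rw [cm, csum, smul_sum]
  refine hB.sum_mem (fun _ _ => by positivity) ?_ fun x hx => hXB hx
  rw [sum_const, nsmul_eq_mul, mul_inv_cancel₀ (by exact_mod_cast hX.card_pos.ne')]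

lemma inertia_eq_card_mul_sum_sub (X : Finset (E d)) (p : E d) :
    inertia X = X.card * ∑ x ∈ X, ‖x - p‖ ^ 2 - ‖csum X - (X.card : ℝ) • p‖ ^ 2 := by
  have hcsum : csum X - (X.card : ℝ) • p = ∑ x ∈ X, (x - p) := by
    rw [sum_sub_distrib, sum_const, csum, Nat.cast_smul_eq_nsmul]
  have hpair : ∑ x ∈ X, ∑ y ∈ X, ‖x - y‖ ^ 2
      = ∑ x ∈ X, ∑ y ∈ X, (‖x - p‖ ^ 2 + ‖y - p‖ ^ 2 - 2 * ⟪x - p, y - p⟫) := by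
    refine sum_congr rfl fun x _ => sum_congr rfl fun y _ => ?_
    rw [← sub_sub_sub_cancel_right x y p, norm_sub_sq_real]
    ring
  rw [inertia, hpair, hcsum, ← real_inner_self_eq_norm_sq, sum_inner]
  simp only [inner_sum]
  simp only [sum_sub_distrib, sum_add_distrib, sum_const, ← mul_sum, nsmul_eq_mul]
  ring

lemma inertia_le_card_mul_sum (X : Finset (E d)) (p : E d) :
    inertia X ≤ X.card * ∑ x ∈ X, ‖x - p‖ ^ 2 := by
  rw [inertia_eq_card_mul_sum_sub X p]
  linarith [sq_nonneg ‖csum X - (X.card : ℝ) • p‖]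

lemma inertia_eq_card_mul_sum_cm (X : Finset (E d)) :
    inertia X = X.card * ∑ x ∈ X, ‖x - cm X‖ ^ 2 := by
  simp [inertia_eq_card_mul_sum_sub X (cm X), csum_eq_card_smul_cm]

lemma norm_sub_cm_insert {X : Finset (E d)} {z : E d} (hz : z ∉ X) :
    ‖z - cm (insert z X)‖ = X.card / (X.card + 1) * ‖z - cm X‖ := by
  have hn : (X.card : ℝ) / (X.card + 1) = 1 - ((X.card : ℝ) + 1)⁻¹ := by field_simp; ring
  have hv : z - (cm X + ((X.card : ℝ) + 1)⁻¹ • (z - cm X))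
      = ((X.card : ℝ) / (X.card + 1)) • (z - cm X) := by
    rw [hn]; module
  rw [cm_insert_of_notMem hz, hv, norm_smul, Real.norm_of_nonneg (by positivity)]

lemma norm_cm_insert_sub_cm {X : Finset (E d)} {z : E d} (hz : z ∉ X) :
    ‖cm (insert z X) - cm X‖ = ((X.card : ℝ) + 1)⁻¹ * ‖z - cm X‖ := by
  rw [cm_insert_of_notMem hz, add_sub_cancel_left, norm_smul,
    Real.norm_of_nonneg (by positivity)]

lemma Amax_pos {X : Finset (E d)} (hX : 2 ≤ X.card) : 0 < Amax X := by
  obtain ⟨a, ha, b, hb, hab⟩ := one_lt_card.1 hX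
  exact sSup_image_norm_sub_pos ha hb hab _

lemma norm_sub_cm_lt_of_mem_Keep {X : Finset (E d)} (hX : 2 ≤ X.card) {B : Set (E d)} {z : E d}
    (hz : z ∈ Keep X B) : ‖z - cm X‖ < 3 * Amax X := by
  have hA := Amax_pos hX
  by_cases hzX : z ∈ X
  · have h := hz.2
    rw [insert_eq_of_mem hzX] at h
    exact h.trans (by change Amax X < _; linarith)
  · have h := hz.2.trans_le (sSup_image_norm_sub_le_add (card_pos.1 (by omega)) _ (cm X))
    rw [norm_sub_rev (cm X), norm_cm_insert_sub_cm hzX, norm_sub_cm_insert hzX] at h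
    change _ < Amax X + _ at h
    have hn : (2 : ℝ) ≤ X.card := by exact_mod_cast hX
    have hcoef : (1 / 3 : ℝ) ≤ X.card / (X.card + 1) - ((X.card : ℝ) + 1)⁻¹ := by
      rw [show (X.card : ℝ) / (X.card + 1) - ((X.card : ℝ) + 1)⁻¹
        = (X.card - 1) / (X.card + 1) by field_simp, le_div_iff₀ (by positivity)]
      linarith
    nlinarith [norm_nonneg (z - cm X)]

lemma mem_Keep_of_norm_sub_cm_lt {X : Finset (E d)} (hX : X.Nonempty) {B : Set (E d)} {z : E d}
    (hzB : z ∈ B) (hz : ‖z - cm X‖ < Amax X) : z ∈ Keep X B := by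
  refine ⟨hzB, ?_⟩
  by_cases hzX : z ∈ X
  · rwa [insert_eq_of_mem hzX]
  · have h := sSup_image_norm_sub_le_add hX (cm X) (cm (insert z X))
    rw [norm_cm_insert_sub_cm hzX] at h
    refine lt_of_lt_of_le ?_ (sub_le_iff_le_add.2 h)
    have hsplit : (X.card : ℝ) / (X.card + 1) * ‖z - cm X‖
        + ((X.card : ℝ) + 1)⁻¹ * ‖z - cm X‖ = ‖z - cm X‖ := by
      field_simp
    rw [norm_sub_cm_insert hzX]
    change _ < Amax X - _
    linarith

lemma sum_norm_sub_cm_sq_le {X : Finset (E d)} :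
    ∑ s ∈ X, ‖s - cm X‖ ^ 2 ≤ X.card * Amax X ^ 2 := by
  rw [← nsmul_eq_mul]
  exact sum_le_card_nsmul _ _ _ fun s hs =>
    pow_le_pow_left₀ (norm_nonneg _) (norm_sub_le_sSup_image hs _) 2

lemma inertia_insert_erase_lt {X : Finset (E d)} (hX : 2 ≤ X.card) {x w : E d} (hx : x ∈ X)
    (hxA : ‖x - cm X‖ = Amax X) (hw : ‖w - cm X‖ < 3 / 4 * Amax X) :
    inertia (insert w (X.erase x)) < (1 - 1 / (4 * (X.card : ℝ))) * inertia X := by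
  set c := cm X
  set S := ∑ s ∈ X, ‖s - c‖ ^ 2
  have hA := Amax_pos hX
  have hn : (2 : ℝ) ≤ X.card := by exact_mod_cast hX
  have hsum : ∑ y ∈ insert w (X.erase x), ‖y - c‖ ^ 2 ≤ ‖w - c‖ ^ 2 + (S - Amax X ^ 2) := by
    rw [← hxA, show S = _ from (sum_erase_add _ _ hx).symm, add_sub_cancel_right]
    by_cases hwx : w ∈ X.erase x
    · rw [insert_eq_of_mem hwx]
      linarith [sq_nonneg ‖w - c‖]
    · rw [sum_insert hwx]
  have hcard : ((insert w (X.erase x)).card : ℝ) ≤ X.card := by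
    have := card_insert_le w (X.erase x)
    rw [card_erase_of_mem hx] at this
    exact_mod_cast this.trans (by omega)
  calc inertia (insert w (X.erase x))
      ≤ (insert w (X.erase x)).card * ∑ y ∈ insert w (X.erase x), ‖y - c‖ ^ 2 :=
        inertia_le_card_mul_sum _ c
    _ ≤ X.card * (‖w - c‖ ^ 2 + (S - Amax X ^ 2)) :=
        mul_le_mul hcard hsum (sum_nonneg fun _ _ => sq_nonneg _) (by positivity)
    _ < (1 - 1 / (4 * (X.card : ℝ))) * (X.card * S) := by
        have hSA : S ≤ X.card * Amax X ^ 2 := sum_norm_sub_cm_sq_le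
        have hw2 : ‖w - c‖ ^ 2 < 9 / 16 * Amax X ^ 2 := by nlinarith [norm_nonneg (w - c)]
        have hF : (1 - 1 / (4 * (X.card : ℝ))) * (X.card * S) = X.card * S - S / 4 := by
          field_simp
        nlinarith
    _ = (1 - 1 / (4 * (X.card : ℝ))) * inertia X := by rw [inertia_eq_card_mul_sum_cm]

lemma volume_image_homothety_inv_natCast (c : E d) {k : ℕ} (hk : k ≠ 0) (s : Set (E d)) :
    volume (AffineMap.homothety c (k⁻¹ : ℝ) '' s) = ((k : ℝ≥0∞) ^ d)⁻¹ * volume s := by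
  rw [Measure.addHaar_image_homothety, finrank_euclideanSpace_fin, inv_pow, abs_inv, abs_pow,
    Nat.abs_cast, ENNReal.ofReal_inv_of_pos (by positivity), ← Nat.cast_pow,
    ENNReal.ofReal_natCast]
  push_cast
  rfl

end

theorem stmt_9_general (d : ℕ) (B : Set (E d))
    (hBconv : Convex ℝ B)
    (X : Finset (E d)) (hX : 2 ≤ X.card) (hXB : ↑X ⊆ B) :
    ((4 : ℝ≥0∞) ^ d)⁻¹ * volume (Keep X B) ≤
      volume {z ∈ Keep X B | ∃ x ∈ X,
        inertia (insert z (X.erase x)) <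
          (1 - 1 / (4 * (X.card : ℝ))) * inertia X} := by
  have hXne : X.Nonempty := card_pos.1 (by omega)
  obtain ⟨x, hx, hxA⟩ := exists_norm_sub_eq_sSup_image hXne (cm X)
  have hcB : cm X ∈ B := cm_mem_of_convex hBconv hXne hXB
  rw [← Nat.cast_ofNat, ← volume_image_homothety_inv_natCast (cm X) four_ne_zero]
  refine measure_mono ?_
  rintro _ ⟨z, hz, rfl⟩
  have hw : ‖AffineMap.homothety (cm X) (4⁻¹ : ℝ) z - cm X‖ < 3 / 4 * Amax X := by
    rw [← dist_eq_norm, dist_homothety_center, dist_eq_norm, norm_sub_rev,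
      Real.norm_of_nonneg (by norm_num)]
    linarith [norm_sub_cm_lt_of_mem_Keep hX hz]
  have hwB : AffineMap.homothety (cm X) (4⁻¹ : ℝ) z ∈ B := by
    rw [AffineMap.homothety_eq_lineMap]
    exact hBconv.lineMap_mem hcB hz.1 ⟨by norm_num, by norm_num⟩
  exact ⟨mem_Keep_of_norm_sub_cm_lt hXne hwB (by linarith [Amax_pos hX]), x, hx,
    inertia_insert_erase_lt hX hx hxA hw⟩

/-- The set of points of `Keep(X;B)` whose arrival can decrease the moment of
inertia by a factor `1 - 1/(4M)` occupies at least a fraction `4^{-d}`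
of `Keep(X;B)`. -/
theorem stmt_9 (d : ℕ) (B : Set (E d))
    (hBconv : Convex ℝ B) (hBcl : IsClosed B) (hBint : (interior B).Nonempty)
    (X : Finset (E d)) (hX : 2 ≤ X.card) (hXB : ↑X ⊆ B) :
    ((4 : ℝ≥0∞) ^ d)⁻¹ * volume (Keep X B) ≤
      volume {z ∈ Keep X B | ∃ x ∈ X,
        inertia (insert z (X.erase x)) <
          (1 - 1 / (4 * (X.card : ℝ))) * inertia X} :=
  stmt_9_general d B hBconv X hX hXB
end
end

section
/- Let d ≥ 1, let B ⊆ ℝ^d be a convex body, let r > 0, and let x ∈ B be such that there exists z ∈ ∂B with ‖x − z‖ ≤ r. Then there exist an index i ∈ {1, …, d} and a real number t with |t| ≤ r·√d such that x + t·e_i ∈ ∂B, where e_1, …, e_d is the standard orthonormal basis of ℝ^d. -/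
open Finset Metric MeasureTheory
open scoped BigOperators ENNReal RealInnerProductSpace

noncomputable section

/-!
Separate the boundary point `z` from the open convex set `int B` by a functional `⟪v, ·⟫`.
Moving from `x` along the axis `e_i` on which `|v_i|` is largest, a step of length
`√d · ‖z - x‖ ≤ r√d` already raises `⟪v, ·⟫` to at least `⟪v, z⟫`, so its endpoint lies outside
`int B`; the segment from `x ∈ int B` to that endpoint then crosses `∂B`.
-/

open Set

theorem IsPreconnected.inter_frontier_nonempty {X : Type*} [TopologicalSpace X] {s t : Set X}
    (hs : IsPreconnected s) (hst : (s ∩ t).Nonempty) (hst' : (s \ t).Nonempty) :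
    (s ∩ frontier t).Nonempty := by
  by_contra h
  have hfr : ∀ y ∈ s, y ∉ frontier t := fun y hy hyf ↦ h ⟨y, hy, hyf⟩
  have hsub : s ⊆ interior t ∪ interior tᶜ := by
    intro y hy
    by_cases hyt : y ∈ t
    · exact .inl (self_sdiff_frontier t ▸ ⟨hyt, hfr y hy⟩)
    · exact .inr (self_sdiff_frontier tᶜ ▸ ⟨hyt, frontier_compl t ▸ hfr y hy⟩)
  obtain ⟨a, has, hat⟩ := hst
  obtain ⟨b, hbs, hbt⟩ := hst'
  obtain ⟨y, -, hyt, hyc⟩ := hs _ _ isOpen_interior isOpen_interior hsub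
    ⟨a, has, self_sdiff_frontier t ▸ ⟨hat, hfr a has⟩⟩
    ⟨b, hbs, self_sdiff_frontier tᶜ ▸ ⟨hbt, frontier_compl t ▸ hfr b hbs⟩⟩
  exact interior_subset hyc (interior_subset hyt)

theorem exists_add_smul_sub_mem_frontier {F : Type*} [AddCommGroup F] [Module ℝ F]
    [TopologicalSpace F] [IsTopologicalAddGroup F] [ContinuousSMul ℝ F] {s : Set F} {a b : F}
    (ha : a ∈ s) (hb : b ∉ s) : ∃ θ ∈ Icc (0 : ℝ) 1, a + θ • (b - a) ∈ frontier s := by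
  obtain ⟨y, hy, hyf⟩ := (convex_segment a b).isPreconnected.inter_frontier_nonempty
    ⟨a, left_mem_segment ℝ a b, ha⟩ ⟨b, right_mem_segment ℝ a b, hb⟩
  rw [segment_eq_image'] at hy
  obtain ⟨θ, hθ, rfl⟩ := hy
  exact ⟨θ, hθ, hyf⟩

theorem EuclideanSpace.exists_norm_le_sqrt_card_mul_abs_apply {ι : Type*} [Fintype ι]
    [Nonempty ι] (v : EuclideanSpace ℝ ι) : ∃ i, ‖v‖ ≤ √(Fintype.card ι) * |v i| := by
  classical
  obtain ⟨i, hi⟩ := exists_eq_ciSup_of_finite (f := fun i ↦ ‖⟪EuclideanSpace.basisFun ι ℝ i, v⟫‖)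
  have h := (EuclideanSpace.basisFun ι ℝ).norm_le_card_mul_iSup_norm_inner v
  rw [← hi] at h
  exact ⟨i, by simpa [EuclideanSpace.inner_single_left] using h⟩

theorem EuclideanSpace.exists_inner_le_mul_apply {ι : Type*} [Fintype ι] [Nonempty ι]
    (v w : EuclideanSpace ℝ ι) :
    ∃ (i : ι) (t : ℝ), |t| ≤ √(Fintype.card ι) * ‖w‖ ∧ ⟪v, w⟫ ≤ t * v i := by
  obtain ⟨i, hi⟩ := v.exists_norm_le_sqrt_card_mul_abs_apply
  set c := √(Fintype.card ι) * ‖w‖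
  have hc : 0 ≤ c := by positivity
  refine ⟨i, SignType.sign (v i) * c, ?_, ?_⟩
  · rw [abs_mul, abs_of_nonneg hc]
    refine mul_le_of_le_one_left hc ?_
    rcases SignType.sign (v i) with _ | _ | _ <;> simp
  · calc ⟪v, w⟫ ≤ ‖v‖ * ‖w‖ := real_inner_le_norm v w
      _ ≤ √(Fintype.card ι) * |v i| * ‖w‖ := by gcongr
      _ = c * (SignType.sign (v i) * v i) := by rw [sign_mul_self]; ring
      _ = SignType.sign (v i) * c * v i := by ring

theorem stmt_19_general (d : ℕ) (hd : 1 ≤ d) (B : Set (E d))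
    (hBconv : Convex ℝ B)
    (r : ℝ) (x : E d) (hx : x ∈ B)
    (z : E d) (hz : z ∈ frontier B) (hxz : ‖x - z‖ ≤ r) :
    ∃ (i : Fin d) (t : ℝ), |t| ≤ r * Real.sqrt d ∧
      x + t • EuclideanSpace.single i (1 : ℝ) ∈ frontier B := by
  have : Nonempty (Fin d) := ⟨⟨0, hd⟩⟩
  by_cases hxi : x ∈ interior B
  · obtain ⟨f, hf⟩ := geometric_hahn_banach_open_point hBconv.interior isOpen_interior hz.2
    set v := (InnerProductSpace.toDual ℝ (E d)).symm f
    have hfv (y : E d) : f y = ⟪v, y⟫ := InnerProductSpace.toDual_symm_apply.symm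
    obtain ⟨i, t, ht, hvt⟩ := v.exists_inner_le_mul_apply (z - x)
    have hpi : x + t • EuclideanSpace.single i 1 ∉ interior B := fun hp ↦ by
      have := hf _ hp
      simp only [hfv, inner_add_right, inner_smul_right, EuclideanSpace.inner_single_right,
        inner_sub_right, Real.ringHom_apply, one_mul] at this hvt
      linarith
    obtain ⟨θ, hθ, hfr⟩ := exists_add_smul_sub_mem_frontier hxi hpi
    refine ⟨i, θ * t, ?_, frontier_interior_subset (by simpa [mul_smul] using hfr)⟩
    rw [norm_sub_rev, Fintype.card_fin] at ht
    calc |θ * t| ≤ |t| := by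
          rw [abs_mul, abs_of_nonneg hθ.1]
          exact mul_le_of_le_one_left (abs_nonneg t) hθ.2
      _ ≤ √d * ‖x - z‖ := ht
      _ ≤ r * √d := by rw [mul_comm]; gcongr
  · have hr : 0 ≤ r := (norm_nonneg _).trans hxz
    exact ⟨⟨0, hd⟩, 0, by rw [abs_zero]; positivity, by simpa using ⟨subset_closure hx, hxi⟩⟩

/-- If `x ∈ B` is within distance `r` of the boundary of the convex body `B`,
then some axis-parallel line through `x` meets `∂B` within distance `r·√d`. -/
theorem stmt_19 (d : ℕ) (hd : 1 ≤ d) (B : Set (E d))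
    (hBconv : Convex ℝ B) (hBcl : IsClosed B) (hBint : (interior B).Nonempty)
    (r : ℝ) (hr : 0 < r) (x : E d) (hx : x ∈ B)
    (z : E d) (hz : z ∈ frontier B) (hxz : ‖x - z‖ ≤ r) :
    ∃ (i : Fin d) (t : ℝ), |t| ≤ r * Real.sqrt d ∧
      x + t • EuclideanSpace.single i (1 : ℝ) ∈ frontier B :=
  stmt_19_general d hd B hBconv r x hx z hz hxz
end
end
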